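/- arXiv:2508.00666 — 2 statements merged into one kernel-verified Lean document; each statement's English description precedes it below -/
import Mathlib

section
/- Let a < b be real numbers, let ψ : (a,b) → [-∞,+∞) be upper semicontinuous, let Ω = {x+iy ∈ ℂ : a < y < b, x > ψ(y)}, let h be a Koenigs map onto Ω, and set c_Ω := inf{c ∈ (-∞,0) : ∫_a^b e^{2cψ(y)} dy < ∞}. Suppose this set is nonempty, c_Ω ∈ (-∞,0), and ∫_a^b e^{2c_Ω ψ(y)} dy = +∞. Then for every λ ∈ ℂ with λ ≠ 0 one has D(e^{λh}) < ∞ if and only if c_Ω < Re λ < 0; that is, the point spectrum on the Dirichlet space equals the open vertical strip {c_Ω < Re λ < 0} together with {0}. (Theorem 1.1(c).) -/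
open MeasureTheory Set Complex Metric
open scoped ENNReal NNReal

noncomputable section

/-- The Dirichlet integral `D(f) = ∫_𝔻 |f'(z)|² dA(z)` over the unit disk. -/
def dirichletIntegral (f : ℂ → ℂ) : ℝ≥0∞ :=
  ∫⁻ z in ball (0 : ℂ) 1, (‖deriv f z‖₊ : ℝ≥0∞) ^ 2

/-- `h` is a Koenigs map onto `Ω`: an injective holomorphic map on the unit disk with image `Ω`. -/
def IsKoenigsMap (h : ℂ → ℂ) (Ω : Set ℂ) : Prop :=
  DifferentiableOn ℂ h (ball 0 1) ∧ InjOn h (ball 0 1) ∧ h '' ball 0 1 = Ω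

/-!
Since `h` is injective and holomorphic, the substitution `w = h z` turns `D(e^{λh})` into
`|λ|² ∫_Ω e^{2 Re(λw)} dA(w)`. Integrating first in `x = Re w` over the half-line `x > ψ(y)` gives
`e^{2σψ(y)} / (-2σ)` when `σ = Re λ < 0` and `+∞` otherwise, while the remaining factor
`e^{-2 Im λ · y}` is bounded above and below on `(a, b)`. Hence `D(e^{λh}) < ∞` exactly when
`Re λ < 0` and `∫_a^b e^{2 Re λ · ψ} < ∞`, i.e. when `Re λ ∈ S`. Finally `S = (c_Ω, 0)`: it is
upward closed in `(-∞, 0)` because `e^{2uψ} ≤ 1 + e^{2cψ}` for `c ≤ u ≤ 0` and `(a, b)` has finite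
length, and it does not contain its infimum since `∫_a^b e^{2c_Ω ψ} = ∞`.
-/

theorem lintegral_image_eq_lintegral_enorm_deriv_sq_mul {U : Set ℂ} (hU : IsOpen U) {h : ℂ → ℂ}
    (hh : DifferentiableOn ℂ h U) (hinj : InjOn h U) (g : ℂ → ℝ≥0∞) :
    ∫⁻ w in h '' U, g w = ∫⁻ z in U, ‖deriv h z‖ₑ ^ 2 * g (h z) := by
  rw [lintegral_image_eq_lintegral_abs_det_fderiv_mul volume hU.measurableSet
    (fun z hz => ((hh.differentiableAt (hU.mem_nhds hz)).hasDerivAt.hasFDerivAt.restrictScalars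
      ℝ).hasFDerivWithinAt) hinj g]
  refine setLIntegral_congr_fun hU.measurableSet fun z _ => ?_
  simp [ContinuousLinearMap.det, LinearMap.det_restrictScalars, Algebra.norm_complex_apply,
    normSq_eq_norm_sq, ENNReal.ofReal_pow]

theorem IsKoenigsMap.measurableSet {h : ℂ → ℂ} {Ω : Set ℂ} (hK : IsKoenigsMap h Ω) :
    MeasurableSet Ω := by
  obtain ⟨hh, hinj, rfl⟩ := hK
  exact measurableSet_ball.image_of_continuousOn_injOn hh.continuousOn hinj

theorem IsKoenigsMap.dirichletIntegral_comp {h : ℂ → ℂ} {Ω : Set ℂ} (hK : IsKoenigsMap h Ω)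
    {F : ℂ → ℂ} (hF : Differentiable ℂ F) :
    dirichletIntegral (fun z => F (h z)) = ∫⁻ w in Ω, ‖deriv F w‖ₑ ^ 2 := by
  obtain ⟨hh, hinj, rfl⟩ := hK
  rw [lintegral_image_eq_lintegral_enorm_deriv_sq_mul isOpen_ball hh hinj, dirichletIntegral]
  refine setLIntegral_congr_fun measurableSet_ball fun z hz => ?_
  have hhz := hh.differentiableAt (isOpen_ball.mem_nhds hz)
  rw [← Function.comp_def, deriv_comp z (hF (h z)) hhz, ← enorm_eq_nnnorm, enorm_mul, mul_pow,
    mul_comm]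

theorem enorm_deriv_exp_const_mul_sq (lam w : ℂ) :
    ‖deriv (fun w => exp (lam * w)) w‖ₑ ^ 2 =
      ‖lam‖ₑ ^ 2 * ENNReal.ofReal (Real.exp (2 * (lam * w).re)) := by
  have hlin : HasDerivAt (fun w => lam * w) lam w := by
    simpa using (hasDerivAt_id w).const_mul lam
  rw [hlin.cexp.deriv, enorm_mul, mul_pow, mul_comm]
  congr 1
  rw [← ofReal_norm, norm_exp, ← ENNReal.ofReal_pow (Real.exp_nonneg _), ← Real.exp_nat_mul,
    Nat.cast_ofNat]

theorem Complex.lintegral_eq_lintegral_lintegral {f : ℂ → ℝ≥0∞} (hf : Measurable f) :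
    ∫⁻ w, f w = ∫⁻ y, ∫⁻ x, f ⟨x, y⟩ := by
  rw [← Complex.volume_preserving_equiv_real_prod.symm.lintegral_comp hf, Measure.volume_eq_prod,
    lintegral_prod_symm (f := fun p => f (measurableEquivRealProd.symm p))
      (hf.comp measurableEquivRealProd.symm.measurable).aemeasurable]
  rfl

theorem setLIntegral_eq_setLIntegral_Ioo_setLIntegral {a b : ℝ} {ψ : ℝ → EReal}
    (hΩ : MeasurableSet {w : ℂ | w.im ∈ Ioo a b ∧ ψ w.im < (w.re : EReal)}) {f : ℂ → ℝ≥0∞}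
    (hf : Measurable f) :
    ∫⁻ w in {w : ℂ | w.im ∈ Ioo a b ∧ ψ w.im < (w.re : EReal)}, f w =
      ∫⁻ y in Ioo a b, ∫⁻ x in {x : ℝ | ψ y < x}, f ⟨x, y⟩ := by
  rw [← lintegral_indicator hΩ, Complex.lintegral_eq_lintegral_lintegral (hf.indicator hΩ),
    ← lintegral_indicator measurableSet_Ioo]
  congr 1 with y
  by_cases hy : y ∈ Ioo a b
  · rw [indicator_of_mem hy,
      ← lintegral_indicator (measurableSet_lt measurable_const measurable_coe_real_ereal)]
    congr 1 with x
    simp [indicator, hy.1, hy.2]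
  · rw [indicator_of_notMem hy]
    rw [mem_Ioo] at hy
    simp [indicator, hy]

theorem setLIntegral_ofReal_exp_mul_of_neg {c : ℝ} (hc : c < 0) (t : EReal) :
    ∫⁻ x in {x : ℝ | t < x}, ENNReal.ofReal (Real.exp (c * x)) =
      ENNReal.ofReal (-c)⁻¹ * EReal.exp (c * t) := by
  induction t with
  | bot =>
    rw [EReal.coe_mul_bot_of_neg hc, EReal.exp_top, ENNReal.mul_top (by simpa using hc)]
    refine eq_top_iff.2 ?_
    calc ⊤ = ∫⁻ _ in Iio (0 : ℝ), (1 : ℝ≥0∞) := by rw [setLIntegral_one, Real.volume_Iio]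
      _ ≤ ∫⁻ x in Iio 0, ENNReal.ofReal (Real.exp (c * x)) := by
        refine setLIntegral_mono' measurableSet_Iio fun x hx => ?_
        rw [ENNReal.one_le_ofReal]
        exact Real.one_le_exp (mul_nonneg_of_nonpos_of_nonpos hc.le (le_of_lt hx))
      _ ≤ _ := lintegral_mono_set fun x _ => EReal.bot_lt_coe x
  | coe r =>
    have hset : {x : ℝ | (r : EReal) < x} = Ioi r := by ext; simp
    rw [hset, ← ofReal_integral_eq_lintegral_ofReal (integrableOn_exp_mul_Ioi hc r)
      (.of_forall fun x => (Real.exp_pos _).le), integral_exp_mul_Ioi hc, ← EReal.coe_mul,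
      EReal.exp_coe, ← ENNReal.ofReal_mul (by simpa using hc.le)]
    congr 1
    field_simp
  | top => simp [EReal.coe_mul_top_of_neg hc]

theorem setLIntegral_ofReal_exp_mul_eq_top_of_nonneg {c : ℝ} (hc : 0 ≤ c) {t : EReal}
    (ht : t < ⊤) : ∫⁻ x in {x : ℝ | t < x}, ENNReal.ofReal (Real.exp (c * x)) = ⊤ := by
  obtain ⟨r, htr, -⟩ := EReal.lt_iff_exists_real_btwn.1 ht
  refine eq_top_iff.2 ?_
  calc ⊤ = ∫⁻ _ in Ioi (max r 0), (1 : ℝ≥0∞) := by rw [setLIntegral_one, Real.volume_Ioi]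
    _ ≤ ∫⁻ x in Ioi (max r 0), ENNReal.ofReal (Real.exp (c * x)) := by
      refine setLIntegral_mono' measurableSet_Ioi fun x hx => ?_
      rw [ENNReal.one_le_ofReal]
      exact Real.one_le_exp (mul_nonneg hc ((le_max_right r 0).trans (le_of_lt hx)))
    _ ≤ _ := by
      refine lintegral_mono_set fun x hx => htr.trans ?_
      exact EReal.coe_lt_coe_iff.2 ((le_max_left r 0).trans_lt hx)

theorem ENNReal.mul_lt_top_iff_right {a b : ℝ≥0∞} (ha₀ : a ≠ 0) (ha : a ≠ ⊤) :
    a * b < ⊤ ↔ b < ⊤ :=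
  ⟨fun h => ENNReal.lt_top_of_mul_ne_top_right h.ne ha₀, ENNReal.mul_lt_top ha.lt_top⟩

theorem lintegral_mul_lt_top_iff_of_ae_le_of_ae_le {α : Type*} [MeasurableSpace α]
    {μ : Measure α} {w f : α → ℝ≥0∞} {m M : ℝ≥0∞} (hm : m ≠ 0) (hM : M ≠ ⊤)
    (hmw : ∀ᵐ x ∂μ, m ≤ w x) (hwM : ∀ᵐ x ∂μ, w x ≤ M) :
    ∫⁻ x, w x * f x ∂μ < ⊤ ↔ ∫⁻ x, f x ∂μ < ⊤ := by
  refine ⟨fun h => ENNReal.lt_top_of_mul_ne_top_right ?_ hm, fun h => ?_⟩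
  · refine ne_top_of_le_ne_top h.ne ((lintegral_const_mul_le m f).trans ?_)
    exact lintegral_mono_ae (hmw.mono fun x hx => mul_le_mul_left hx _)
  · calc ∫⁻ x, w x * f x ∂μ ≤ ∫⁻ x, M * f x ∂μ :=
          lintegral_mono_ae (hwM.mono fun x hx => mul_le_mul_left hx _)
      _ = M * ∫⁻ x, f x ∂μ := lintegral_const_mul' M f hM
      _ < ⊤ := ENNReal.mul_lt_top hM.lt_top h

theorem IsKoenigsMap.dirichletIntegral_exp_const_mul {a b : ℝ} {ψ : ℝ → EReal} {h : ℂ → ℂ}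
    (hK : IsKoenigsMap h {w : ℂ | w.im ∈ Ioo a b ∧ ψ w.im < (w.re : EReal)}) (lam : ℂ) :
    dirichletIntegral (fun z => exp (lam * h z)) = ‖lam‖ₑ ^ 2 *
      ∫⁻ y in Ioo a b, ENNReal.ofReal (Real.exp (-2 * lam.im * y)) *
        ∫⁻ x in {x : ℝ | ψ y < x}, ENNReal.ofReal (Real.exp (2 * lam.re * x)) := by
  rw [hK.dirichletIntegral_comp (F := fun w => exp (lam * w)) (by fun_prop)]
  simp_rw [enorm_deriv_exp_const_mul_sq]
  rw [lintegral_const_mul' _ _ (by simp), setLIntegral_eq_setLIntegral_Ioo_setLIntegral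
    hK.measurableSet (by fun_prop)]
  congr 1
  refine lintegral_congr fun y => ?_
  rw [← lintegral_const_mul' _ _ ENNReal.ofReal_ne_top]
  refine lintegral_congr fun x => ?_
  rw [← ENNReal.ofReal_mul (Real.exp_nonneg _), ← Real.exp_add]
  congr 2
  simp only [mul_re]
  ring

theorem IsKoenigsMap.dirichletIntegral_exp_const_mul_lt_top_iff {a b : ℝ} (hab : a < b)
    {ψ : ℝ → EReal} (hψ : ∀ y ∈ Ioo a b, ψ y < ⊤) {h : ℂ → ℂ}
    (hK : IsKoenigsMap h {w : ℂ | w.im ∈ Ioo a b ∧ ψ w.im < (w.re : EReal)}) {lam : ℂ}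
    (hlam : lam ≠ 0) :
    dirichletIntegral (fun z => exp (lam * h z)) < ⊤ ↔
      lam.re < 0 ∧ ∫⁻ y in Ioo a b, EReal.exp (((2 * lam.re : ℝ) : EReal) * ψ y) < ⊤ := by
  set K := |-2 * lam.im| * max |a| |b|
  have hweight : ∀ y ∈ Ioo a b, ENNReal.ofReal (Real.exp (-K)) ≤
      ENNReal.ofReal (Real.exp (-2 * lam.im * y)) ∧
      ENNReal.ofReal (Real.exp (-2 * lam.im * y)) ≤ ENNReal.ofReal (Real.exp K) := by
    intro y hy
    have hyK : |-2 * lam.im * y| ≤ K := by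
      rw [abs_mul]
      exact mul_le_mul_of_nonneg_left (abs_le_max_abs_abs hy.1.le hy.2.le) (abs_nonneg _)
    exact ⟨ENNReal.ofReal_le_ofReal (Real.exp_le_exp.2 (abs_le.1 hyK).1),
      ENNReal.ofReal_le_ofReal (Real.exp_le_exp.2 (abs_le.1 hyK).2)⟩
  rw [hK.dirichletIntegral_exp_const_mul, ENNReal.mul_lt_top_iff_right (by simpa using hlam)
    (by simp), lintegral_mul_lt_top_iff_of_ae_le_of_ae_le (by simp [Real.exp_pos])
    ENNReal.ofReal_ne_top (ae_restrict_of_forall_mem measurableSet_Ioo fun y hy => (hweight y hy).1)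
    (ae_restrict_of_forall_mem measurableSet_Ioo fun y hy => (hweight y hy).2)]
  rcases lt_or_ge lam.re 0 with hneg | hnonneg
  · rw [setLIntegral_congr_fun measurableSet_Ioo fun y _ =>
      setLIntegral_ofReal_exp_mul_of_neg (by linarith) (ψ y), lintegral_const_mul' _ _
      ENNReal.ofReal_ne_top, ENNReal.mul_lt_top_iff_right (by simpa using hneg)
      ENNReal.ofReal_ne_top]
    exact (and_iff_right hneg).symm
  · rw [setLIntegral_congr_fun measurableSet_Ioo fun y hy =>
      setLIntegral_ofReal_exp_mul_eq_top_of_nonneg (by linarith) (hψ y hy), setLIntegral_const,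
      ENNReal.top_mul (by simpa using hab)]
    simp [hnonneg.not_gt]

theorem EReal.exp_mul_le_one_add_exp_mul {c u : ℝ} (hcu : c ≤ u) (hu : u ≤ 0) (t : EReal) :
    EReal.exp (u * t) ≤ 1 + EReal.exp (c * t) := by
  rcases le_total t 0 with ht | ht
  · exact le_add_left (EReal.exp_monotone (EReal.mul_le_mul_of_nonpos_right
      (EReal.coe_le_coe_iff.2 hcu) ht))
  · refine le_add_right ?_
    rw [← EReal.exp_zero]
    exact EReal.exp_monotone (EReal.mul_nonpos_iff.2 (.inr ⟨EReal.coe_nonpos.2 hu, ht⟩))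

theorem lintegral_exp_mul_lt_top_of_le {α : Type*} [MeasurableSpace α] {μ : Measure α}
    [IsFiniteMeasure μ] {f : α → EReal} {c u : ℝ} (hcu : c ≤ u) (hu : u ≤ 0)
    (hc : ∫⁻ x, EReal.exp (c * f x) ∂μ < ⊤) : ∫⁻ x, EReal.exp (u * f x) ∂μ < ⊤ :=
  calc ∫⁻ x, EReal.exp (u * f x) ∂μ ≤ ∫⁻ x, (1 + EReal.exp (c * f x)) ∂μ :=
        lintegral_mono fun x => EReal.exp_mul_le_one_add_exp_mul hcu hu (f x)
    _ = μ univ + ∫⁻ x, EReal.exp (c * f x) ∂μ := by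
        rw [lintegral_add_left measurable_const, lintegral_one]
    _ < ⊤ := ENNReal.add_lt_top.2 ⟨measure_lt_top μ univ, hc⟩

theorem eq_Ioo_csInf_of_Ico_subset {α : Type*} [ConditionallyCompleteLinearOrder α]
    {S : Set α} {m : α} (hne : S.Nonempty) (hbdd : BddBelow S) (hinf : sInf S ∉ S)
    (hS : ∀ c ∈ S, Ico c m ⊆ S) (hSm : S ⊆ Iio m) : S = Ioo (sInf S) m := by
  ext u
  refine ⟨fun hu => ⟨(csInf_le hbdd hu).lt_of_ne fun h => hinf (h ▸ hu), hSm hu⟩, ?_⟩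
  rintro ⟨hlt, hum⟩
  obtain ⟨c, hc, hcu⟩ := exists_lt_of_csInf_lt hne hlt
  exact hS c hc ⟨hcu.le, hum⟩

theorem dirichlet_spectrum_hyperbolic_open_strip_general
    (a b : ℝ) (hab : a < b) (ψ : ℝ → EReal)
    (hψ_lt_top : ∀ y ∈ Ioo a b, ψ y < ⊤)
    (Ω : Set ℂ)
    (hΩ : Ω = {w : ℂ | w.im ∈ Ioo a b ∧ ψ w.im < (w.re : EReal)})
    (h : ℂ → ℂ) (hKoenigs : IsKoenigsMap h Ω)
    (S : Set ℝ)
    (hS : S = {c : ℝ | c < 0 ∧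
      ∫⁻ y in Ioo a b, EReal.exp (((2 * c : ℝ) : EReal) * ψ y) < ⊤})
    (hSne : S.Nonempty) (hSbdd : BddBelow S)
    (hcΩ_int : ∫⁻ y in Ioo a b, EReal.exp (((2 * sInf S : ℝ) : EReal) * ψ y) = ⊤)
    (lam : ℂ) (hlam : lam ≠ 0) :
    dirichletIntegral (fun z => Complex.exp (lam * h z)) < ⊤ ↔
      (sInf S < lam.re ∧ lam.re < 0) := by
  subst hΩ
  have hmemS : ∀ c, c ∈ S ↔ c < 0 ∧
      ∫⁻ y in Ioo a b, EReal.exp (((2 * c : ℝ) : EReal) * ψ y) < ⊤ := fun c => by rw [hS]; rfl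
  have hS_Ioo : S = Ioo (sInf S) 0 := by
    refine eq_Ioo_csInf_of_Ico_subset hSne hSbdd (fun hmem => ((hmemS _).1 hmem).2.ne hcΩ_int)
      (fun c hc u hu => ?_) fun c hc => ((hmemS c).1 hc).1
    rw [hmemS] at hc ⊢
    exact ⟨hu.2, lintegral_exp_mul_lt_top_of_le (by linarith [hu.1]) (by linarith [hu.2]) hc.2⟩
  rw [hKoenigs.dirichletIntegral_exp_const_mul_lt_top_iff hab hψ_lt_top hlam, ← hmemS]
  exact Set.ext_iff.1 hS_Ioo lam.re

/-- **Theorem 1.1(c).** With `c_Ω = inf{c < 0 : ∫_a^b e^{2cψ} dy < ∞}` finite and negative, if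
`∫_a^b e^{2 c_Ω ψ(y)} dy = +∞` then the nonzero point spectrum on the Dirichlet space is the
open vertical strip `{c_Ω < Re λ < 0}`. -/
theorem dirichlet_spectrum_hyperbolic_open_strip
    (a b : ℝ) (hab : a < b) (ψ : ℝ → EReal)
    (hψ_usc : UpperSemicontinuousOn ψ (Ioo a b))
    (hψ_lt_top : ∀ y ∈ Ioo a b, ψ y < ⊤)
    (Ω : Set ℂ)
    (hΩ : Ω = {w : ℂ | w.im ∈ Ioo a b ∧ ψ w.im < (w.re : EReal)})
    (h : ℂ → ℂ) (hKoenigs : IsKoenigsMap h Ω)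
    (S : Set ℝ)
    (hS : S = {c : ℝ | c < 0 ∧
      ∫⁻ y in Ioo a b, EReal.exp (((2 * c : ℝ) : EReal) * ψ y) < ⊤})
    (hSne : S.Nonempty) (hSbdd : BddBelow S) (hcΩ_neg : sInf S < 0)
    (hcΩ_int : ∫⁻ y in Ioo a b, EReal.exp (((2 * sInf S : ℝ) : EReal) * ψ y) = ⊤)
    (lam : ℂ) (hlam : lam ≠ 0) :
    dirichletIntegral (fun z => Complex.exp (lam * h z)) < ⊤ ↔
      (sInf S < lam.re ∧ lam.re < 0) :=
  dirichlet_spectrum_hyperbolic_open_strip_general a b hab ψ hψ_lt_top Ω hΩ h hKoenigs S hS hSne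
    hSbdd hcΩ_int lam hlam
end
end

section
/- Let Ω be a domain in ℂ that is convex in the positive direction and contained in a horizontal strip, and let h be a Koenigs map onto Ω. Suppose W(Ω) = ∫_{-∞}^0 ℓ_Ω(x) dx < ∞ and that for every M > 0 there is x_M < 0 such that ℓ_Ω(x) ≤ e^{2Mx} for all x < x_M (i.e. δ_Ω = lim_{x→-∞} log ℓ_Ω(x)/(2x) = +∞). Then for every λ ∈ ℂ with λ ≠ 0 one has D(e^{λh}) < ∞ if and only if Re λ < 0; that is, the point spectrum on the Dirichlet space equals {Re λ < 0} ∪ {0}. (Theorem 1.2(b).) -/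
open MeasureTheory Set Complex Metric
open scoped ENNReal NNReal

noncomputable section

/-- `Ω` is convex in the positive direction: `Ω + t ⊆ Ω` for all `t ≥ 0`. -/
def ConvexPosDir (Ω : Set ℂ) : Prop :=
  ∀ t : ℝ, 0 ≤ t → ∀ w ∈ Ω, w + (t : ℂ) ∈ Ω

/-- `ℓ_Ω(x)`: one-dimensional Lebesgue measure of the vertical slice `{y : x + iy ∈ Ω}`. -/
def sliceLen (Ω : Set ℂ) (x : ℝ) : ℝ≥0∞ :=
  volume {y : ℝ | (x : ℂ) + (y : ℂ) * Complex.I ∈ Ω}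

/-!
Conformal invariance of the Dirichlet integral turns `D(e^{λh})` into `|λ|² ∫_Ω e^{2 Re(λw)} dA(w)`.
In a horizontal strip `Re(λw)` differs from `Re λ · Re w` by a bounded amount, so by Fubini
`D(e^{λh}) < ∞` iff `∫ e^{2 Re λ · x} ℓ_Ω(x) dx < ∞`. If `Re λ ≥ 0` this diverges, since
convexity in the positive direction keeps `ℓ_Ω` bounded below on a half-line. If `Re λ < 0` it
converges: on the right `ℓ_Ω` is bounded by the width of the strip, and on the left the decay
`ℓ_Ω(x) ≤ e^{2Mx}` with `M = 1 - Re λ` beats the growth of `e^{2 Re λ · x}`.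
-/

lemma det_restrictScalars_toSpanSingleton (c : ℂ) :
    ((ContinuousLinearMap.toSpanSingleton ℂ c).restrictScalars ℝ).det = normSq c := by
  have hmul : ((ContinuousLinearMap.toSpanSingleton ℂ c).restrictScalars ℝ).toLinearMap
      = Algebra.lmul ℝ ℂ c := by
    ext z
    simp [mul_comm]
  rw [ContinuousLinearMap.det, hmul, ← Algebra.norm_apply, Algebra.norm_complex_apply]

theorem dirichletIntegral_comp_eq_setLIntegral {F h : ℂ → ℂ} (hF : Differentiable ℂ F)
    (hh : DifferentiableOn ℂ h (ball 0 1)) (hinj : InjOn h (ball 0 1)) :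
    dirichletIntegral (F ∘ h) = ∫⁻ w in h '' ball 0 1, (‖deriv F w‖₊ : ℝ≥0∞) ^ 2 := by
  have hderiv : ∀ z ∈ ball (0 : ℂ) 1, HasDerivAt h (deriv h z) z := fun z hz =>
    ((hh z hz).differentiableAt (isOpen_ball.mem_nhds hz)).hasDerivAt
  rw [dirichletIntegral, lintegral_image_eq_lintegral_abs_det_fderiv_mul volume measurableSet_ball
    (fun z hz => ((hderiv z hz).hasFDerivAt.restrictScalars ℝ).hasFDerivWithinAt) hinj]
  refine setLIntegral_congr_fun measurableSet_ball fun z hz => ?_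
  rw [((hF (h z)).hasDerivAt.comp z (hderiv z hz)).deriv,
    det_restrictScalars_toSpanSingleton, abs_of_nonneg (normSq_nonneg _), normSq_eq_norm_sq,
    ENNReal.ofReal_pow (norm_nonneg _), ofReal_norm, enorm_eq_nnnorm, nnnorm_mul]
  push_cast
  ring

lemma lintegral_lt_top_iff_of_le_const_mul {α : Type*} [MeasurableSpace α] {μ : Measure α}
    {f g : α → ℝ≥0∞} {C : ℝ≥0∞} (hC : C ≠ ⊤) (hfg : ∀ᵐ x ∂μ, f x ≤ C * g x)
    (hgf : ∀ᵐ x ∂μ, g x ≤ C * f x) :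
    ∫⁻ x, f x ∂μ < ⊤ ↔ ∫⁻ x, g x ∂μ < ⊤ := by
  have bound {u v : α → ℝ≥0∞} (huv : ∀ᵐ x ∂μ, u x ≤ C * v x) (hv : ∫⁻ x, v x ∂μ < ⊤) :
      ∫⁻ x, u x ∂μ < ⊤ :=
    calc ∫⁻ x, u x ∂μ ≤ ∫⁻ x, C * v x ∂μ := lintegral_mono_ae huv
      _ = C * ∫⁻ x, v x ∂μ := lintegral_const_mul' C v hC
      _ < ⊤ := ENNReal.mul_lt_top hC.lt_top hv
  exact ⟨bound hgf, bound hfg⟩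

lemma ofReal_exp_le_of_abs_sub_le {x y c : ℝ} (h : |x - y| ≤ c) :
    ENNReal.ofReal (Real.exp x) ≤ ENNReal.ofReal (Real.exp c) * ENNReal.ofReal (Real.exp y) := by
  rw [← ENNReal.ofReal_mul (Real.exp_nonneg _), ← Real.exp_add]
  exact ENNReal.ofReal_le_ofReal (Real.exp_le_exp.2 (by linarith [le_abs_self (x - y)]))

lemma setLIntegral_exp_re_mul_lt_top_iff {Ω : Set ℂ} (hΩ : MeasurableSet Ω) {a b : ℝ}
    (hstrip : Ω ⊆ {w : ℂ | a < w.im ∧ w.im < b}) (lam : ℂ) :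
    ∫⁻ w in Ω, ENNReal.ofReal (Real.exp (2 * (lam * w).re)) < ⊤ ↔
      ∫⁻ w in Ω, ENNReal.ofReal (Real.exp (2 * lam.re * w.re)) < ⊤ := by
  have hclose : ∀ w ∈ Ω,
      |2 * (lam * w).re - 2 * lam.re * w.re| ≤ 2 * |lam.im| * max |a| |b| := by
    intro w hw
    have him : |w.im| ≤ max |a| |b| := abs_le_max_abs_abs (hstrip hw).1.le (hstrip hw).2.le
    calc |2 * (lam * w).re - 2 * lam.re * w.re| = 2 * |lam.im| * |w.im| := by
          rw [mul_re, show 2 * (lam.re * w.re - lam.im * w.im) - 2 * lam.re * w.re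
            = -(2 * (lam.im * w.im)) by ring, abs_neg, abs_mul, abs_mul, abs_two, mul_assoc]
      _ ≤ 2 * |lam.im| * max |a| |b| := by gcongr
  refine lintegral_lt_top_iff_of_le_const_mul ENNReal.ofReal_ne_top
    (ae_restrict_of_forall_mem hΩ fun w hw => ofReal_exp_le_of_abs_sub_le (hclose w hw))
    (ae_restrict_of_forall_mem hΩ fun w hw => ofReal_exp_le_of_abs_sub_le ?_)
  rw [abs_sub_comm]
  exact hclose w hw

lemma measurableSet_setOf_add_mul_I_mem {Ω : Set ℂ} (hΩ : MeasurableSet Ω) (x : ℝ) :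
    MeasurableSet {y : ℝ | (x : ℂ) + y * I ∈ Ω} :=
  (by fun_prop : Measurable fun y : ℝ => (x : ℂ) + y * I) hΩ

lemma setLIntegral_comp_re_eq_lintegral_mul_sliceLen {Ω : Set ℂ} (hΩ : MeasurableSet Ω)
    {g : ℝ → ℝ≥0∞} (hg : Measurable g) :
    ∫⁻ w in Ω, g w.re = ∫⁻ x, g x * sliceLen Ω x := by
  have hF : Measurable (Ω.indicator fun w : ℂ => g w.re) := (hg.comp measurable_re).indicator hΩ
  rw [← lintegral_indicator hΩ, ← volume_preserving_equiv_real_prod.symm.lintegral_comp hF,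
    Measure.volume_eq_prod,
    lintegral_prod _ (by exact (hF.comp measurableEquivRealProd.symm.measurable).aemeasurable)]
  congr 1 with x
  rw [sliceLen, ← lintegral_indicator_const (measurableSet_setOf_add_mul_I_mem hΩ x)]
  congr 1 with y
  rw [measurableEquivRealProd_symm_apply, mk_eq_add_mul_I]
  by_cases hy : (x : ℂ) + y * I ∈ Ω <;> simp [hy]

lemma ofReal_two_mul_le_sliceLen {Ω : Set ℂ} (hconv : ConvexPosDir Ω) {w₀ : ℂ} {r : ℝ}
    (hball : ball w₀ r ⊆ Ω) {x : ℝ} (hx : w₀.re ≤ x) :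
    ENNReal.ofReal (2 * r) ≤ sliceLen Ω x := by
  have hsub : Ioo (w₀.im - r) (w₀.im + r) ⊆ {y : ℝ | (x : ℂ) + y * I ∈ Ω} := by
    intro y hy
    have hmem : (w₀.re : ℂ) + y * I ∈ ball w₀ r := by
      rw [mem_ball, dist_eq, show (w₀.re : ℂ) + y * I - w₀ = ((y - w₀.im : ℝ) : ℂ) * I by
        apply Complex.ext <;> simp, norm_mul, norm_I, norm_real, Real.norm_eq_abs, mul_one,
        abs_sub_lt_iff]
      constructor <;> linarith [hy.1, hy.2]
    have hshift := hconv (x - w₀.re) (sub_nonneg.2 hx) _ (hball hmem)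
    rwa [show (w₀.re : ℂ) + y * I + ((x - w₀.re : ℝ) : ℂ) = x + y * I by push_cast; ring]
      at hshift
  calc ENNReal.ofReal (2 * r) = volume (Ioo (w₀.im - r) (w₀.im + r)) := by
        rw [Real.volume_Ioo]; ring_nf
    _ ≤ sliceLen Ω x := measure_mono hsub

lemma lintegral_exp_mul_mul_sliceLen_eq_top {Ω : Set ℂ} (hopen : IsOpen Ω) (hne : Ω.Nonempty)
    (hconv : ConvexPosDir Ω) {c : ℝ} (hc : 0 ≤ c) :
    ∫⁻ x, ENNReal.ofReal (Real.exp (c * x)) * sliceLen Ω x = ⊤ := by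
  obtain ⟨w₀, hw₀⟩ := hne
  obtain ⟨r, hr, hball⟩ := Metric.isOpen_iff.1 hopen w₀ hw₀
  refine eq_top_iff.2 ?_
  calc ⊤ = ∫⁻ _ in Ici (max w₀.re 0), ENNReal.ofReal (2 * r) := by
        rw [setLIntegral_const, Real.volume_Ici, ENNReal.mul_top (by positivity)]
    _ ≤ ∫⁻ x in Ici (max w₀.re 0), ENNReal.ofReal (Real.exp (c * x)) * sliceLen Ω x := by
        refine setLIntegral_mono' measurableSet_Ici fun x hx => ?_
        have hexp : 1 ≤ ENNReal.ofReal (Real.exp (c * x)) :=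
          ENNReal.one_le_ofReal.2 (Real.one_le_exp (mul_nonneg hc (le_of_max_le_right hx)))
        calc ENNReal.ofReal (2 * r) = 1 * ENNReal.ofReal (2 * r) := (one_mul _).symm
          _ ≤ _ := mul_le_mul' hexp (ofReal_two_mul_le_sliceLen hconv hball (le_of_max_le_left hx))
    _ ≤ _ := setLIntegral_le_lintegral _ _

lemma sliceLen_le_of_subset_strip {Ω : Set ℂ} {a b : ℝ}
    (hstrip : Ω ⊆ {w : ℂ | a < w.im ∧ w.im < b}) (x : ℝ) :
    sliceLen Ω x ≤ ENNReal.ofReal (b - a) := by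
  rw [← Real.volume_Ioo]
  exact measure_mono fun y hy => by simpa using hstrip hy

lemma lintegral_exp_mul_mul_lt_top {ℓ : ℝ → ℝ≥0∞} {L : ℝ≥0∞} (hL : L ≠ ⊤) (hbdd : ∀ x, ℓ x ≤ L)
    {c d x₀ : ℝ} (hc : c < 0) (hcd : 0 < c + d)
    (hdecay : ∀ x, x < x₀ → ℓ x ≤ ENNReal.ofReal (Real.exp (d * x))) :
    ∫⁻ x, ENNReal.ofReal (Real.exp (c * x)) * ℓ x < ⊤ := by
  rw [← lintegral_add_compl _ (measurableSet_Iio (a := x₀)), compl_Iio]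
  refine ENNReal.add_lt_top.2 ⟨?_, ?_⟩
  · calc _ ≤ ∫⁻ x in Iio x₀, ENNReal.ofReal (Real.exp ((c + d) * x)) := by
          refine setLIntegral_mono' measurableSet_Iio fun x hx => ?_
          rw [add_mul, Real.exp_add, ENNReal.ofReal_mul (Real.exp_nonneg _)]
          gcongr
          exact hdecay x hx
      _ < ⊤ := ((integrableOn_exp_mul_Iic hcd x₀).mono_set Iio_subset_Iic_self).setLIntegral_lt_top
  · calc _ ≤ ∫⁻ x in Ici x₀, ENNReal.ofReal (Real.exp (c * x)) * L :=
          setLIntegral_mono' measurableSet_Ici fun x _ => by gcongr; exact hbdd x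
      _ < ⊤ := by
          rw [lintegral_mul_const' _ _ hL]
          exact ENNReal.mul_lt_top ((integrableOn_Ici_iff_integrableOn_Ioi (by simp)).mpr
            (integrableOn_exp_mul_Ioi hc x₀)).setLIntegral_lt_top hL.lt_top

lemma coe_nnnorm_cexp_sq (ζ : ℂ) :
    (‖cexp ζ‖₊ : ℝ≥0∞) ^ 2 = ENNReal.ofReal (Real.exp (2 * ζ.re)) := by
  rw [← enorm_eq_nnnorm, ← ofReal_norm, ← ENNReal.ofReal_pow (norm_nonneg _), norm_exp, pow_two,
    ← Real.exp_add, ← two_mul]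

lemma dirichletIntegral_exp_mul_lt_top_iff {Ω : Set ℂ} (hΩ : MeasurableSet Ω) {a b : ℝ}
    (hstrip : Ω ⊆ {w : ℂ | a < w.im ∧ w.im < b}) {h : ℂ → ℂ} (hh : IsKoenigsMap h Ω)
    {lam : ℂ} (hlam : lam ≠ 0) :
    dirichletIntegral (fun z => cexp (lam * h z)) < ⊤ ↔
      ∫⁻ x, ENNReal.ofReal (Real.exp (2 * lam.re * x)) * sliceLen Ω x < ⊤ := by
  obtain ⟨hdiff, hinj, himg⟩ := hh
  have hderiv (w : ℂ) : (‖deriv (fun w => cexp (lam * w)) w‖₊ : ℝ≥0∞) ^ 2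
      = (‖lam‖₊ : ℝ≥0∞) ^ 2 * ENNReal.ofReal (Real.exp (2 * (lam * w).re)) := by
    rw [((hasDerivAt_id' w).const_mul lam).cexp.deriv, mul_one, nnnorm_mul, ENNReal.coe_mul,
      mul_pow, mul_comm, coe_nnnorm_cexp_sq]
  change dirichletIntegral ((fun w => cexp (lam * w)) ∘ h) < ⊤ ↔ _
  rw [dirichletIntegral_comp_eq_setLIntegral (by fun_prop) hdiff hinj, himg]
  simp_rw [hderiv]
  rw [lintegral_const_mul' _ _ (by simp), ← setLIntegral_comp_re_eq_lintegral_mul_sliceLen hΩ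
    (by fun_prop), ← setLIntegral_exp_re_mul_lt_top_iff hΩ hstrip lam]
  simp [lt_top_iff_ne_top, ENNReal.mul_eq_top, hlam]

theorem dirichlet_spectrum_hyperbolic_W_finite_delta_infinite_general
    (Ω : Set ℂ) (hopen : IsOpen Ω)
    (hconv : ConvexPosDir Ω)
    (hstrip : ∃ a b : ℝ, Ω ⊆ {w : ℂ | a < w.im ∧ w.im < b})
    (h : ℂ → ℂ) (hKoenigs : IsKoenigsMap h Ω)
    (hδ : ∀ M : ℝ, 0 < M → ∃ xM : ℝ, xM < 0 ∧ ∀ x : ℝ, x < xM →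
      sliceLen Ω x ≤ ENNReal.ofReal (Real.exp (2 * M * x)))
    (lam : ℂ) (hlam : lam ≠ 0) :
    dirichletIntegral (fun z => Complex.exp (lam * h z)) < ⊤ ↔ lam.re < 0 := by
  obtain ⟨a, b, hab⟩ := hstrip
  rw [dirichletIntegral_exp_mul_lt_top_iff hopen.measurableSet hab hKoenigs hlam]
  constructor
  · intro hfin
    by_contra! hre
    have hne : Ω.Nonempty := hKoenigs.2.2 ▸ (nonempty_ball.2 one_pos).image h
    exact hfin.ne (lintegral_exp_mul_mul_sliceLen_eq_top hopen hne hconv (by positivity))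
  · intro hre
    obtain ⟨x₀, -, hdecay⟩ := hδ (1 - lam.re) (by linarith)
    exact lintegral_exp_mul_mul_lt_top ENNReal.ofReal_ne_top (sliceLen_le_of_subset_strip hab)
      (by linarith) (by linarith) hdecay

/-- **Theorem 1.2(b).** If `W(Ω) < ∞` and `δ_Ω = lim_{x→-∞} log ℓ_Ω(x)/(2x) = +∞` (expressed by:
for every `M > 0`, `ℓ_Ω(x) ≤ e^{2Mx}` for all sufficiently negative `x`), then the point spectrum
on the Dirichlet space is `{Re λ < 0} ∪ {0}`. -/
theorem dirichlet_spectrum_hyperbolic_W_finite_delta_infinite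
    (Ω : Set ℂ) (hopen : IsOpen Ω) (hconn : IsConnected Ω)
    (hconv : ConvexPosDir Ω)
    (hstrip : ∃ a b : ℝ, Ω ⊆ {w : ℂ | a < w.im ∧ w.im < b})
    (h : ℂ → ℂ) (hKoenigs : IsKoenigsMap h Ω)
    (hW : ∫⁻ x in Iio (0 : ℝ), sliceLen Ω x < ⊤)
    (hδ : ∀ M : ℝ, 0 < M → ∃ xM : ℝ, xM < 0 ∧ ∀ x : ℝ, x < xM →
      sliceLen Ω x ≤ ENNReal.ofReal (Real.exp (2 * M * x)))
    (lam : ℂ) (hlam : lam ≠ 0) :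
    dirichletIntegral (fun z => Complex.exp (lam * h z)) < ⊤ ↔ lam.re < 0 :=
  dirichlet_spectrum_hyperbolic_W_finite_delta_infinite_general Ω hopen hconv hstrip h hKoenigs hδ
    lam hlam
end
end
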